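/- arXiv:0806.4111 — 2 statements merged into one kernel-verified Lean document; each statement's English description precedes it below -/
import Mathlib

section
/- If X and Y are path-connected metrizable spaces (or CW-complexes), then TC(X × Y) ≤ TC(X) + TC(Y) − 1. -/
/-!
Choose partitions of unity `(fᵢ)` on `X × X` and `(gⱼ)` on `Y × Y` subordinate to motion-planning
covers `(Uᵢ)_{i < n}` and `(Vⱼ)_{j < m}`, and pull them back to `(X × Y) × (X × Y)`. Let `W_{ij}`
be where `fᵢ gⱼ` is positive and strictly exceeds every `f_a g_b` with `a + b ≥ i + j`. These
open sets cover, two of them with equal `i + j` are disjoint, and `W_{ij}` lies over `Uᵢ × Vⱼ`,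
where the product of the two planners is a planner. Hence the planners glue over each of the
`n + m - 1` levels `⋃_{i + j = k} W_{ij}`.
-/

open unitInterval ContinuousMap

/-- `HasMotionCover X k`: `X × X` admits a cover by `k` open subsets, on each of which
the path fibration `π : PX → X × X`, `π γ = (γ 0, γ 1)`, admits a continuous section. -/
def HasMotionCover (X : Type*) [TopologicalSpace X] (k : ℕ) : Prop :=
  ∃ U : Fin k → Set (X × X),
    (∀ i, IsOpen (U i)) ∧ (⋃ i, U i) = Set.univ ∧
    ∀ i, ∃ s : C((U i : Set (X × X)), C(I, X)),
      ∀ p : U i, ((s p) 0, (s p) 1) = (p : X × X)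

/-- The topological complexity of `X`: the minimal number `k` such that `X × X` admits a
cover by `k` open subsets over each of which the path fibration admits a continuous
section; `⊤` (infinity) if no such `k` exists. -/
noncomputable def topologicalComplexity (X : Type*) [TopologicalSpace X] : ℕ∞ :=
  sInf ((↑) '' {k : ℕ | HasMotionCover X k})

theorem exists_greatest_argmax {α β : Type*} [Fintype α] [Nonempty α] [LinearOrder α]
    [LinearOrder β] (f : α → β) : ∃ a, (∀ b, f b ≤ f a) ∧ ∀ b, f b = f a → b ≤ a := by
  obtain ⟨a, -, ha⟩ := Finset.exists_max_image Finset.univ (fun b => toLex (f b, b))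
    Finset.univ_nonempty
  have hle b : f b < f a ∨ f b = f a ∧ b ≤ a := Prod.Lex.toLex_le_toLex.mp (ha b (by simp))
  exact ⟨a, fun b => (hle b).elim le_of_lt (·.1.le),
    fun b hb => ((hle b).resolve_left hb.not_lt).2⟩

section DominantProductSet

variable {Z : Type*} {n m : ℕ} (f : Fin n → Z → ℝ) (g : Fin m → Z → ℝ)

def dominantProductSet (p : Fin n × Fin m) : Set Z :=
  {z | 0 < f p.1 z * g p.2 z} ∩
    ⋂ q ∈ {q : Fin n × Fin m | (p.1 : ℕ) + p.2 ≤ q.1 + q.2 ∧ q ≠ p},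
      {z | f q.1 z * g q.2 z < f p.1 z * g p.2 z}

variable {f g}

theorem isOpen_dominantProductSet [TopologicalSpace Z] (hf : ∀ i, Continuous (f i))
    (hg : ∀ j, Continuous (g j)) (p : Fin n × Fin m) : IsOpen (dominantProductSet f g p) :=
  (isOpen_lt continuous_const ((hf p.1).mul (hg p.2))).inter <|
    (Set.toFinite _).isOpen_biInter fun q _ =>
      isOpen_lt ((hf q.1).mul (hg q.2)) ((hf p.1).mul (hg p.2))

theorem pos_of_mem_dominantProductSet (hf : ∀ i z, 0 ≤ f i z) {p : Fin n × Fin m} {z : Z}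
    (hz : z ∈ dominantProductSet f g p) : 0 < f p.1 z ∧ 0 < g p.2 z :=
  (pos_and_pos_or_neg_and_neg_of_mul_pos hz.1).resolve_right fun h => (hf p.1 z).not_gt h.1

theorem disjoint_dominantProductSet {p q : Fin n × Fin m} (hpq : p ≠ q)
    (hw : (p.1 : ℕ) + p.2 = q.1 + q.2) :
    Disjoint (dominantProductSet f g p) (dominantProductSet f g q) :=
  Set.disjoint_left.mpr fun z hp hq => by
    have hqp : f q.1 z * g q.2 z < f p.1 z * g p.2 z := Set.mem_iInter₂.mp hp.2 q ⟨hw.le, hpq.symm⟩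
    exact hqp.not_gt (Set.mem_iInter₂.mp hq.2 p ⟨hw.ge, hpq⟩)

/-- `z` lies in the set indexed by `(i₀, j₀)`, the largest maximisers of `f · z` and `g · z`:
a product `f a z * g b z` can only reach `f i₀ z * g j₀ z` if `a ≤ i₀` and `b ≤ j₀`. -/
theorem iUnion_dominantProductSet (hf0 : ∀ i z, 0 ≤ f i z) (hf : ∀ z, ∃ i, 0 < f i z)
    (hg : ∀ z, ∃ j, 0 < g j z) :
    ⋃ p, dominantProductSet f g p = Set.univ := by
  refine Set.eq_univ_of_forall fun z => Set.mem_iUnion.mpr ?_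
  obtain ⟨i₁, hi₁⟩ := hf z
  obtain ⟨j₁, hj₁⟩ := hg z
  have : Nonempty (Fin n) := ⟨i₁⟩
  have : Nonempty (Fin m) := ⟨j₁⟩
  obtain ⟨i₀, hi₀, hi₀_max⟩ := exists_greatest_argmax (f · z)
  obtain ⟨j₀, hj₀, hj₀_max⟩ := exists_greatest_argmax (g · z)
  have hfi₀ : 0 < f i₀ z := hi₁.trans_le (hi₀ i₁)
  have hgj₀ : 0 < g j₀ z := hj₁.trans_le (hj₀ j₁)
  refine ⟨(i₀, j₀), mul_pos hfi₀ hgj₀, Set.mem_iInter₂.mpr fun ⟨a, b⟩ ⟨hw, hne⟩ => ?_⟩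
  change f a z * g b z < f i₀ z * g j₀ z
  rcases (hi₀ a).lt_or_eq with ha | ha
  · nlinarith [hf0 a z, hj₀ b]
  rcases (hj₀ b).lt_or_eq with hb | hb
  · rw [ha]
    exact mul_lt_mul_of_pos_left hb hfi₀
  have hai := Fin.le_def.mp (hi₀_max a ha)
  have hbj := Fin.le_def.mp (hj₀_max b hb)
  exact absurd (by simp only at hw; ext <;> simp <;> omega) hne

end DominantProductSet

section MotionPlanner

variable {X Y : Type*} [TopologicalSpace X] [TopologicalSpace Y]

def HasMotionPlanner (U : Set (X × X)) : Prop :=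
  ∃ s : C(U, C(I, X)), ∀ p : U, ((s p) 0, (s p) 1) = (p : X × X)

theorem HasMotionPlanner.mono {U V : Set (X × X)} (hU : HasMotionPlanner U) (hVU : V ⊆ U) :
    HasMotionPlanner V :=
  let ⟨s, hs⟩ := hU
  ⟨s.comp ⟨Set.inclusion hVU, continuous_inclusion hVU⟩, fun _ => hs _⟩

theorem HasMotionPlanner.prod {U : Set (X × X)} {V : Set (Y × Y)} (hU : HasMotionPlanner U)
    (hV : HasMotionPlanner V) :
    HasMotionPlanner {z : (X × Y) × (X × Y) | (z.1.1, z.2.1) ∈ U ∧ (z.1.2, z.2.2) ∈ V} := by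
  obtain ⟨s, hs⟩ := hU
  obtain ⟨t, ht⟩ := hV
  set W := {z : (X × Y) × (X × Y) | (z.1.1, z.2.1) ∈ U ∧ (z.1.2, z.2.2) ∈ V}
  let πX : C(W, U) := ⟨fun z => ⟨(z.1.1.1, z.1.2.1), z.2.1⟩, by fun_prop⟩
  let πY : C(W, V) := ⟨fun z => ⟨(z.1.1.2, z.1.2.2), z.2.2⟩, by fun_prop⟩
  refine ⟨ContinuousMap.curry <| .prodMk (s.uncurry.comp (πX.prodMap (.id I)))
    (t.uncurry.comp (πY.prodMap (.id I))), fun z => ?_⟩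
  have hsz := Prod.ext_iff.mp (hs (πX z))
  have htz := Prod.ext_iff.mp (ht (πY z))
  exact Prod.ext (Prod.ext hsz.1 htz.1) (Prod.ext hsz.2 htz.2)

open Function in
theorem HasMotionPlanner.iUnion {ι : Type*} {W : ι → Set (X × X)} (hWo : ∀ i, IsOpen (W i))
    (hW : Pairwise (Disjoint on W)) (hs : ∀ i, HasMotionPlanner (W i)) :
    HasMotionPlanner (⋃ i, W i) := by
  choose s hs using hs
  let S i : Set (⋃ i, W i) := Subtype.val ⁻¹' W i
  let φ i : C(S i, C(I, X)) := (s i).comp ⟨fun x => ⟨x.1.1, x.2⟩, by fun_prop⟩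
  have hφ i j (x : ⋃ i, W i) (hxi : x ∈ S i) (hxj : x ∈ S j) : φ i ⟨x, hxi⟩ = φ j ⟨x, hxj⟩ := by
    obtain rfl : i = j := by_contra fun hij => (hW hij).ne_of_mem hxi hxj rfl
    rfl
  have hS (x : ⋃ i, W i) : ∃ i, S i ∈ nhds x := by
    obtain ⟨i, hi⟩ := Set.mem_iUnion.mp x.2
    exact ⟨i, ((hWo i).preimage continuous_subtype_val).mem_nhds hi⟩
  refine ⟨liftCover S φ hφ hS, fun x => ?_⟩
  obtain ⟨i, hi⟩ := Set.mem_iUnion.mp x.2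
  rw [liftCover_coe (⟨x, hi⟩ : S i)]
  exact hs i _

theorem HasMotionCover.of_levels {ι : Type*} {k : ℕ} {W : ι → Set (X × X)} (level : ι → ℕ)
    (hlevel : ∀ i, level i < k) (hWo : ∀ i, IsOpen (W i)) (hW : ⋃ i, W i = Set.univ)
    (hdisj : ∀ i j, i ≠ j → level i = level j → Disjoint (W i) (W j))
    (hs : ∀ i, HasMotionPlanner (W i)) : HasMotionCover X k := by
  refine ⟨fun l => ⋃ i : {i // level i = l}, W i, fun l => isOpen_iUnion fun i => hWo i,
    Set.eq_univ_of_forall fun z => ?_,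
    fun l => HasMotionPlanner.iUnion (fun i => hWo i)
      (fun i j hij => hdisj i j (Subtype.coe_ne_coe.mpr hij) (i.2.trans j.2.symm)) (fun i => hs i)⟩
  obtain ⟨i, hi⟩ := Set.mem_iUnion.mp (hW.ge (Set.mem_univ z))
  exact Set.mem_iUnion.mpr ⟨⟨level i, hlevel i⟩, Set.mem_iUnion.mpr ⟨⟨i, rfl⟩, hi⟩⟩

end MotionPlanner

theorem PartitionOfUnity.IsSubordinate.mem_of_pos {ι Z : Type*} [TopologicalSpace Z]
    {s : Set Z} {ρ : PartitionOfUnity ι Z s} {W : ι → Set Z} (hρ : ρ.IsSubordinate W) {i : ι}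
    {x : Z} (hx : 0 < ρ i x) : x ∈ W i :=
  hρ i (subset_tsupport _ hx.ne')

theorem HasMotionCover.prod {X Y : Type*} [TopologicalSpace X] [TopologicalSpace Y]
    [NormalSpace (X × X)] [NormalSpace (Y × Y)] {n m : ℕ} (hX : HasMotionCover X n)
    (hY : HasMotionCover Y m) : HasMotionCover (X × Y) (n + m - 1) := by
  obtain ⟨U, hUo, hU, hUs⟩ := hX
  obtain ⟨V, hVo, hV, hVs⟩ := hY
  obtain ⟨f, hf⟩ := PartitionOfUnity.exists_isSubordinate_of_locallyFinite isClosed_univ U hUo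
    (locallyFinite_of_finite U) hU.ge
  obtain ⟨g, hg⟩ := PartitionOfUnity.exists_isSubordinate_of_locallyFinite isClosed_univ V hVo
    (locallyFinite_of_finite V) hV.ge
  let F i (z : (X × Y) × (X × Y)) := f i (z.1.1, z.2.1)
  let G j (z : (X × Y) × (X × Y)) := g j (z.1.2, z.2.2)
  refine .of_levels (W := dominantProductSet F G) (fun p => p.1 + p.2) (fun p => by omega)
    (isOpen_dominantProductSet (fun i => by fun_prop) (fun j => by fun_prop))
    (iUnion_dominantProductSet (fun i _ => f.nonneg i _) (fun z => f.exists_pos trivial)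
      (fun z => g.exists_pos trivial))
    (fun _ _ => disjoint_dominantProductSet)
    (fun p => (HasMotionPlanner.prod (hUs p.1) (hVs p.2)).mono fun z hz => ?_)
  obtain ⟨hFz, hGz⟩ := pos_of_mem_dominantProductSet (fun i _ => f.nonneg i _) hz
  exact ⟨hf.mem_of_pos hFz, hg.mem_of_pos hGz⟩

theorem topologicalComplexity_le {X : Type*} [TopologicalSpace X] {k : ℕ}
    (h : HasMotionCover X k) : topologicalComplexity X ≤ k :=
  sInf_le ⟨k, h, rfl⟩

theorem exists_hasMotionCover_of_topologicalComplexity_ne_top {X : Type*} [TopologicalSpace X]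
    (h : topologicalComplexity X ≠ ⊤) :
    ∃ k, HasMotionCover X k ∧ (k : ℕ∞) = topologicalComplexity X := by
  have hS : (Nat.cast '' {k : ℕ | HasMotionCover X k} : Set ℕ∞).Nonempty :=
    Set.nonempty_iff_ne_empty.mpr fun hS => h (by rw [topologicalComplexity, hS, sInf_empty])
  exact csInf_mem hS

theorem tc_product_inequality_general (X Y : Type*) [TopologicalSpace X] [TopologicalSpace Y]
    [TopologicalSpace.MetrizableSpace X] [TopologicalSpace.MetrizableSpace Y] :
    topologicalComplexity (X × Y) ≤ topologicalComplexity X + topologicalComplexity Y - 1 := by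
  rcases eq_or_ne (topologicalComplexity X) ⊤ with hX | hX
  · simp [hX, ENat.top_sub_one]
  rcases eq_or_ne (topologicalComplexity Y) ⊤ with hY | hY
  · simp [hY, ENat.top_sub_one]
  obtain ⟨n, hn, hnX⟩ := exists_hasMotionCover_of_topologicalComplexity_ne_top hX
  obtain ⟨m, hm, hmY⟩ := exists_hasMotionCover_of_topologicalComplexity_ne_top hY
  calc topologicalComplexity (X × Y) ≤ (n + m - 1 : ℕ) := topologicalComplexity_le (hn.prod hm)
    _ = topologicalComplexity X + topologicalComplexity Y - 1 := by
      rw [← hnX, ← hmY, ENat.natCast_sub, Nat.cast_add, Nat.cast_one]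

/-- the product inequality `TC(X × Y) ≤ TC(X) + TC(Y) - 1` for
path-connected metrizable spaces. -/
theorem tc_product_inequality (X Y : Type*) [TopologicalSpace X] [TopologicalSpace Y]
    [PathConnectedSpace X] [PathConnectedSpace Y]
    [TopologicalSpace.MetrizableSpace X] [TopologicalSpace.MetrizableSpace Y] :
    topologicalComplexity (X × Y) ≤ topologicalComplexity X + topologicalComplexity Y - 1 :=
  tc_product_inequality_general X Y
end

section
/- TC(S¹) = 2, where S¹ is the circle. -/
open unitInterval ContinuousMap

/-! A single section over all of `X × X` contracts `X` along the paths ending at a base point,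
and the circle is not contractible: its universal cover `ℝ → S¹` has the nontrivial deck group
`2πℤ`, which is its fundamental group. Conversely, on `{(x, y) | y / x ≠ w}` the quotient `y / x`
has a continuous angle `θ` and `t ↦ x · exp (t θ)` runs from `x` to `y`; the sets for `w = 1`
and `w = -1` cover `S¹ × S¹`. -/

open Complex

theorem ContractibleSpace.of_hasMotionCover_one {X : Type*} [TopologicalSpace X] [Nonempty X]
    (h : HasMotionCover X 1) : ContractibleSpace X := by
  obtain ⟨U, -, hcover, hsection⟩ := h
  obtain ⟨s, hs⟩ := hsection 0
  have hU : ∀ p, p ∈ U 0 := fun p => by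
    simpa [Fin.exists_fin_one] using Set.eq_univ_iff_forall.1 hcover p
  obtain ⟨x₀⟩ := ‹Nonempty X›
  let toBase : C(X, U 0) := ⟨fun x => ⟨(x, x₀), hU _⟩, by fun_prop⟩
  refine (contractible_iff_id_nullhomotopic X).2 ⟨x₀, ⟨
    { toContinuousMap := (s.comp toBase).uncurry.comp ⟨Prod.swap, continuous_swap⟩
      map_zero_left := fun x => congrArg Prod.fst (hs (toBase x))
      map_one_left := fun x => congrArg Prod.snd (hs (toBase x)) }⟩⟩

theorem not_hasMotionCover_zero {X : Type*} [TopologicalSpace X] [Nonempty X] :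
    ¬ HasMotionCover X 0 := by
  rintro ⟨U, -, hcover, -⟩
  obtain ⟨x⟩ := ‹Nonempty X›
  simpa using Set.eq_univ_iff_forall.1 hcover (x, x)

theorem two_le_of_hasMotionCover {X : Type*} [TopologicalSpace X] [Nonempty X]
    (hX : ¬ ContractibleSpace X) {k : ℕ} (h : HasMotionCover X k) : 2 ≤ k := by
  match k, h with
  | 0, h => exact absurd h not_hasMotionCover_zero
  | 1, h => exact absurd (.of_hasMotionCover_one h) hX
  | _ + 2, _ => omega

namespace Circle

theorem not_simplyConnectedSpace : ¬ SimplyConnectedSpace Circle := by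
  intro _
  have : Nontrivial (AddSubgroup.zmultiples (2 * Real.pi)) :=
    ⟨⟨0, ⟨2 * Real.pi, AddSubgroup.mem_zmultiples _⟩, by simp [Subtype.ext_iff, Real.pi_ne_zero]⟩⟩
  let e := isAddQuotientCoveringMap_exp.fundamentalGroupEquiv (x := 1) ⟨0, by simp⟩
  exact not_subsingleton _ e.symm.toEquiv.subsingleton

theorem not_contractibleSpace : ¬ ContractibleSpace Circle :=
  fun _ => not_simplyConnectedSpace inferInstance

theorem coe_mem_slitPlane {z : Circle} (hz : z ≠ -1) : (z : ℂ) ∈ slitPlane := by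
  refine mem_slitPlane_iff_arg.2 ⟨fun h => hz ?_, z.coe_ne_zero⟩
  rw [← arg_eq_arg, coe_neg, coe_one, arg_neg_one, h]

theorem exists_continuousOn_lift_compl_singleton (w : Circle) :
    ∃ θ : Circle → ℝ, ContinuousOn θ {w}ᶜ ∧ ∀ z, exp (θ z) = z := by
  -- `arg` has its branch cut at `-1`; rotating it by `-w` moves the cut to `w`
  refine ⟨fun z => arg ((z / -w : Circle) : ℂ) + arg ((-w : Circle) : ℂ), ?_, fun z => ?_⟩
  · have hquot : Continuous fun z : Circle => ((z / -w : Circle) : ℂ) :=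
      continuous_subtype_val.comp (continuous_id.div_const _)
    refine fun z hz => ContinuousAt.continuousWithinAt ?_
    refine (ContinuousAt.comp (f := fun z : Circle => ((z / -w : Circle) : ℂ))
      (continuousAt_arg (coe_mem_slitPlane ?_)) hquot.continuousAt).add continuousAt_const
    rwa [Ne, div_eq_iff_eq_mul, neg_one_mul, neg_neg]
  · rw [exp_add, exp_arg, exp_arg, div_mul_cancel]

theorem exists_section_of_continuousOn_lift {U : Set (Circle × Circle)}
    {θ : Circle × Circle → ℝ} (hθ : ContinuousOn θ U) (hexp : ∀ p ∈ U, exp (θ p) = p.2 / p.1) :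
    ∃ s : C(U, C(I, Circle)), ∀ p : U, (s p 0, s p 1) = (p : Circle × Circle) := by
  have hc : Continuous fun q : U × I => (q.1 : Circle × Circle).1 * exp (q.2 * θ q.1) :=
    (continuous_fst.comp (continuous_subtype_val.comp continuous_fst)).mul
      (exp.continuous.comp ((continuous_subtype_val.comp continuous_snd).mul
        (hθ.domRestrict.comp continuous_fst)))
  refine ⟨ContinuousMap.curry ⟨_, hc⟩, fun p => ?_⟩
  simp [hexp p p.2]

theorem hasMotionCover_two : HasMotionCover Circle 2 := by
  let w : Fin 2 → Circle := ![1, -1]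
  let U : Fin 2 → Set (Circle × Circle) := fun i => (fun p => p.2 / p.1) ⁻¹' {w i}ᶜ
  have hratio : Continuous fun p : Circle × Circle => p.2 / p.1 := by fun_prop
  refine ⟨U, fun i => isOpen_compl_singleton.preimage hratio, ?_, fun i => ?_⟩
  · refine Set.eq_univ_iff_forall.2 fun p => Set.mem_iUnion.2 ?_
    by_cases h : p.2 / p.1 = 1
    · exact ⟨1, show p.2 / p.1 ≠ -1 by rw [h]; exact (neg_ne_self 1).symm⟩
    · exact ⟨0, h⟩
  · obtain ⟨θ, hθ, hexp⟩ := exists_continuousOn_lift_compl_singleton (w i)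
    exact exists_section_of_continuousOn_lift (hθ.comp hratio.continuousOn fun _ h => h)
      fun p _ => hexp _

end Circle

/-- `TC(S¹) = 2`. -/
theorem tc_circle : topologicalComplexity Circle = 2 := by
  refine le_antisymm (sInf_le ⟨2, Circle.hasMotionCover_two, rfl⟩) (le_sInf ?_)
  rintro _ ⟨k, hk, rfl⟩
  exact_mod_cast two_le_of_hasMotionCover Circle.not_contractibleSpace hk
end
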